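/- Let A be a Hilbert algebra and φ an endomorphism of A (a map with φ(x → y) = φ(x) → φ(y) for all x, y). Then φ is a closure operator (i.e., x ≤ φ(x) for all x and φ ∘ φ = φ) if and only if for every idempotent endomorphism τ of A (τ ∘ τ = τ), the endomorphism τ ∘ φ is also idempotent. -/
import Mathlib


/-- A Hilbert algebra: a set with implication `imp` and constant `one`. -/
class HilbertAlgebra (A : Type*) where
  imp : A → A → A
  one : A
  imp_one : ∀ x y : A, imp x (imp y x) = one
  imp_distrib : ∀ x y z : A,
    imp (imp x (imp y z)) (imp (imp x y) (imp x z)) = one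
  imp_antisymm : ∀ x y : A, imp x y = one → imp y x = one → x = y

namespace HilbertAlgebra

variable {A : Type*} [HilbertAlgebra A]

/-- The natural order of a Hilbert algebra: `x ≤ y` iff `x → y = 1`. -/
def le (x y : A) : Prop := imp x y = one

/-- An endomorphism of a Hilbert algebra. -/
def IsEndo (φ : A → A) : Prop := ∀ x y : A, φ (imp x y) = imp (φ x) (φ y)

lemma eq_one_of_one_imp {u : A} (h : imp one u = one) : u = one := by
  apply imp_antisymm
  · have h1 := imp_one u (one : A)
    rw [h] at h1
    exact h1
  · exact h

lemma imp_self (x : A) : imp x x = one := by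
  have h2 := imp_distrib x (imp x x) x
  rw [imp_one] at h2
  have h3 := eq_one_of_one_imp h2
  rw [imp_one] at h3
  exact eq_one_of_one_imp h3

lemma imp_one' (x : A) : imp x one = one := by
  have h := imp_one x x
  rw [imp_self] at h
  exact h

lemma mp2 {x y z : A} (h1 : imp x (imp y z) = one) (h2 : imp x y = one) :
    imp x z = one := by
  have h := imp_distrib x y z
  rw [h1] at h
  have h' := eq_one_of_one_imp h
  rw [h2] at h'
  exact eq_one_of_one_imp h'

lemma le_trans' {a b c : A} (h1 : imp a b = one) (h2 : imp b c = one) :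
    imp a c = one := by
  refine mp2 (y := b) ?_ h1
  rw [h2]
  exact imp_one' a

lemma one_imp (x : A) : imp one x = x :=
  imp_antisymm _ _ (mp2 (imp_self _) (imp_one' _)) (imp_one x one)

lemma le_B (x y z : A) : imp (imp y z) (imp (imp x y) (imp x z)) = one :=
  le_trans' (imp_one (imp y z) x) (imp_distrib x y z)

lemma imp_mono_right {v w : A} (u : A) (h : imp v w = one) :
    imp (imp u v) (imp u w) = one := by
  have hb := le_B u v w
  rw [h] at hb
  exact eq_one_of_one_imp hb

lemma imp_anti_left {u v : A} (w : A) (h : imp u v = one) :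
    imp (imp v w) (imp u w) = one := by
  have hb := le_B u v w
  rw [h, one_imp] at hb
  exact hb

lemma exchange_le (x y z : A) :
    imp (imp x (imp y z)) (imp y (imp x z)) = one :=
  le_trans' (imp_distrib x y z) (imp_anti_left (imp x z) (imp_one y x))

lemma exchange (x y z : A) : imp x (imp y z) = imp y (imp x z) :=
  imp_antisymm _ _ (exchange_le x y z) (exchange_le y x z)

lemma contraction (x y : A) : imp x (imp x y) = imp x y := by
  apply imp_antisymm
  · have h := imp_distrib x x y
    rw [imp_self, one_imp] at h
    exact h
  · exact imp_one (imp x y) x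

lemma imp_distrib_eq (x y z : A) :
    imp x (imp y z) = imp (imp x y) (imp x z) := by
  refine imp_antisymm _ _ (imp_distrib x y z) ?_
  have h1 : imp (imp (imp x y) z) (imp y z) = one :=
    imp_anti_left z (imp_one y x)
  have h2 : imp (imp x (imp (imp x y) z)) (imp x (imp y z)) = one :=
    imp_mono_right x h1
  rw [exchange x (imp x y) z] at h2
  exact h2

lemma endo_one {τ : A → A} (hτ : IsEndo τ) : τ one = one := by
  have h : τ (imp (one : A) one) = imp (τ one) (τ one) := hτ one one
  rw [imp_self] at h
  rw [imp_self] at h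
  exact h

lemma endo_mono {τ : A → A} (hτ : IsEndo τ) {a b : A} (h : imp a b = one) :
    imp (τ a) (τ b) = one := by
  rw [← hτ a b, h, endo_one hτ]

lemma kernel_le {φ τ : A → A} (hφ : IsEndo φ) (hτ : IsEndo τ)
    (hle : ∀ x : A, imp x (φ x) = one) {p q : A} (hpq : τ p = τ q) :
    imp (τ (φ q)) (τ (φ p)) = one := by
  have s1 : τ (imp q p) = one := by
    rw [hτ q p, hpq, imp_self]
  have s2 : imp (imp q p) (φ (imp q p)) = one := hle (imp q p)
  have s3 := endo_mono hτ s2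
  rw [s1] at s3
  have s4 := eq_one_of_one_imp s3
  rw [hφ q p, hτ (φ q) (φ p)] at s4
  exact s4

lemma kernel {φ τ : A → A} (hφ : IsEndo φ) (hτ : IsEndo τ)
    (hle : ∀ x : A, imp x (φ x) = one) {p q : A} (hpq : τ p = τ q) :
    τ (φ p) = τ (φ q) :=
  imp_antisymm _ _ (kernel_le hφ hτ hle hpq.symm) (kernel_le hφ hτ hle hpq)

/-- An endomorphism `φ` is a closure operator iff `τ ∘ φ` is idempotent for every
idempotent endomorphism `τ`. -/
theorem closure_iff_comp_idempotent (φ : A → A) (hφ : IsEndo φ) :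
    ((∀ x : A, le x (φ x)) ∧ φ ∘ φ = φ) ↔
      (∀ τ : A → A, IsEndo τ → τ ∘ τ = τ → (τ ∘ φ) ∘ (τ ∘ φ) = τ ∘ φ) := by
  constructor
  · rintro ⟨hle, hidem⟩ τ hτ hτi
    have hle' : ∀ x : A, imp x (φ x) = one := hle
    have hphiphi : ∀ y : A, φ (φ y) = φ y := fun y => congrFun hidem y
    have hττ : ∀ y : A, τ (τ y) = τ y := fun y => congrFun hτi y
    funext x
    show τ (φ (τ (φ x))) = τ (φ x)
    have hpq : τ (τ (φ x)) = τ (φ x) := hττ (φ x)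
    have h := kernel hφ hτ hle' hpq
    rw [hphiphi x] at h
    exact h
  · intro H
    have hid : IsEndo (id : A → A) := fun x y => rfl
    have hφφ := H id hid rfl
    have hidem : φ ∘ φ = φ := by
      simpa [Function.id_comp] using hφφ
    have hphiphi : ∀ y : A, φ (φ y) = φ y := fun y => congrFun hidem y
    refine ⟨?_, hidem⟩
    intro x
    have hτ : IsEndo (fun y : A => imp x y) := fun a b => imp_distrib_eq x a b
    have hτi : (fun y : A => imp x y) ∘ (fun y : A => imp x y)
        = (fun y : A => imp x y) := by
      funext y
      exact contraction x y
    have h := congrFun (H _ hτ hτi) x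
    simp only [Function.comp_apply] at h
    have h2 : φ (imp x (φ x)) = one := by
      rw [hφ x (φ x), hphiphi x, imp_self]
    rw [h2, imp_one'] at h
    exact h.symm

end HilbertAlgebra
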